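/- (Approximation guarantee of Theorem 5.1.) Under the setup of Algorithm 3 with true processing-time matrix t, predicted matrix t_hat, parameter gamma in [1, m], and prediction error eta >= 1 satisfying t(i,j) <= eta * t_hat(i,j) and t_hat(i,j) <= eta * t(i,j) for all i, j, the allocation a produced by Algorithm 3 under truthful bidding satisfies F(a, t) <= min( (1 + 2*gamma) * eta^2, m^3 / gamma^2 ) * MS(t). -/

import Mathlib

/-- The makespan of allocation `a` (jobs to machines) for the
processing-time matrix `t`: the largest total load of a machine. -/
noncomputable def mkspan {m n : ℕ} (a : Fin n → Fin m) (t : Fin m → Fin n → ℝ) : ℝ :=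
  sSup {x : ℝ | ∃ i : Fin m, x = ∑ j : Fin n, if a j = i then t i j else 0}

/-- The minimum makespan of the scheduling instance `t` over all allocations. -/
noncomputable def optMS {m n : ℕ} (t : Fin m → Fin n → ℝ) : ℝ :=
  sInf {x : ℝ | ∃ a : Fin n → Fin m, x = mkspan a t}

/-!
Every weight lies in `[γ²/m², 1]`, so the weighted-minimum rule never picks a machine that is
more than `m²/γ²` times slower than the fastest one for that job; summing over the jobs bounds the
makespan by `m³/γ² · MS(t)`.

For the other bound, each job either lands on its machine under `ā`, at true cost at most
`η · t̄(ā(j), j)`, or its true cost is at most `(γ/m) · η · t̄(ā(j), j)`. The second kind adds at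
most `γ/m · η · ∑ⱼ t̄(ā(j), j) ≤ γ η F(ā, t̄)` to every machine, so `F(a, t) ≤ (1 + γ) η F(ā, t̄)`,
and `F(ā, t̄) ≤ η MS(t)` because `t̄ ≤ t̂ ≤ η t` and `ā` is optimal for `t̄`.
-/

open Finset

section Makespan

variable {m n : ℕ}

def load (a : Fin n → Fin m) (t : Fin m → Fin n → ℝ) (i : Fin m) : ℝ :=
  ∑ j, if a j = i then t i j else 0

theorem mkspan_eq_iSup (a : Fin n → Fin m) (t : Fin m → Fin n → ℝ) :
    mkspan a t = ⨆ i, load a t i := by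
  rw [mkspan, iSup]
  congr 1
  ext x
  simp [load, eq_comm]

theorem optMS_eq_iInf (t : Fin m → Fin n → ℝ) : optMS t = ⨅ a, mkspan a t := by
  rw [optMS, iInf]
  congr 1
  ext x
  simp [eq_comm]

theorem load_le_mkspan (a : Fin n → Fin m) (t : Fin m → Fin n → ℝ) (i : Fin m) :
    load a t i ≤ mkspan a t := by
  rw [mkspan_eq_iSup]
  exact le_ciSup (Set.finite_range _).bddAbove i

theorem mkspan_le [NeZero m] {a : Fin n → Fin m} {t : Fin m → Fin n → ℝ} {B : ℝ}
    (h : ∀ i, load a t i ≤ B) : mkspan a t ≤ B := by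
  rw [mkspan_eq_iSup]
  exact ciSup_le h

theorem mkspan_nonneg {a : Fin n → Fin m} {t : Fin m → Fin n → ℝ} (ht : ∀ i j, 0 ≤ t i j) :
    0 ≤ mkspan a t := by
  rw [mkspan_eq_iSup]
  refine Real.iSup_nonneg fun i => sum_nonneg fun j _ => ?_
  split_ifs
  exacts [ht i j, le_rfl]

theorem mkspan_mono {a : Fin n → Fin m} {t t' : Fin m → Fin n → ℝ} (h : ∀ i j, t i j ≤ t' i j) :
    mkspan a t ≤ mkspan a t' := by
  simp only [mkspan_eq_iSup]
  refine ciSup_mono (Set.finite_range _).bddAbove fun i => sum_le_sum fun j _ => ?_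
  split_ifs
  exacts [h i j, le_rfl]

theorem mkspan_const_mul {a : Fin n → Fin m} {t : Fin m → Fin n → ℝ} {c : ℝ} (hc : 0 ≤ c) :
    mkspan a (fun i j => c * t i j) = c * mkspan a t := by
  simp only [mkspan_eq_iSup, Real.mul_iSup_of_nonneg hc, load, mul_sum, mul_ite, mul_zero]

theorem load_le_sum {a : Fin n → Fin m} {t : Fin m → Fin n → ℝ} (ht : ∀ i j, 0 ≤ t i j)
    (i : Fin m) : load a t i ≤ ∑ j, t (a j) j := by
  refine sum_le_sum fun j _ => ?_
  split_ifs with h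
  · rw [h]
  · exact ht _ _

theorem sum_le_mul_mkspan (a : Fin n → Fin m) (t : Fin m → Fin n → ℝ) :
    ∑ j, t (a j) j ≤ m * mkspan a t := by
  calc ∑ j, t (a j) j = ∑ i, load a t i := by simp only [load]; rw [sum_comm]; simp
    _ ≤ ∑ _i : Fin m, mkspan a t := sum_le_sum fun i _ => load_le_mkspan a t i
    _ = m * mkspan a t := by simp

theorem exists_mkspan_eq_optMS [NeZero m] (t : Fin m → Fin n → ℝ) :
    ∃ a, mkspan a t = optMS t := by
  rw [optMS_eq_iInf]
  exact exists_eq_ciInf_of_finite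

theorem optMS_nonneg [NeZero m] {t : Fin m → Fin n → ℝ} (ht : ∀ i j, 0 ≤ t i j) :
    0 ≤ optMS t := by
  obtain ⟨a, ha⟩ := exists_mkspan_eq_optMS t
  exact ha ▸ mkspan_nonneg ht

theorem mkspan_le_mul_optMS_of_le_mul [NeZero m] {a : Fin n → Fin m} {t : Fin m → Fin n → ℝ}
    {c : ℝ} (ht : ∀ i j, 0 ≤ t i j) (hc : 0 ≤ c) (h : ∀ j i, t (a j) j ≤ c * t i j) :
    mkspan a t ≤ c * m * optMS t := by
  obtain ⟨a', ha'⟩ := exists_mkspan_eq_optMS t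
  refine mkspan_le fun i => ?_
  calc load a t i ≤ ∑ j, t (a j) j := load_le_sum ht i
    _ ≤ ∑ j, c * t (a' j) j := sum_le_sum fun j _ => h j (a' j)
    _ = c * ∑ j, t (a' j) j := by rw [mul_sum]
    _ ≤ c * (m * mkspan a' t) := by gcongr; exact sum_le_mul_mkspan a' t
    _ = c * m * optMS t := by rw [ha', mul_assoc]

theorem mkspan_le_mul_optMS_of_isMin {b : Fin n → Fin m} {s t : Fin m → Fin n → ℝ} {η : ℝ}
    [NeZero m] (hb : ∀ a, mkspan b s ≤ mkspan a s) (hs : ∀ i j, s i j ≤ η * t i j)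
    (hη : 0 ≤ η) : mkspan b s ≤ η * optMS t := by
  obtain ⟨a, ha⟩ := exists_mkspan_eq_optMS t
  calc mkspan b s ≤ mkspan a s := hb a
    _ ≤ mkspan a (fun i j => η * t i j) := mkspan_mono hs
    _ = η * optMS t := by rw [mkspan_const_mul hη, ha]

theorem mkspan_le_of_agree_or_le_mul [NeZero m] {a b : Fin n → Fin m}
    {s t : Fin m → Fin n → ℝ} {ε : ℝ} (hs : ∀ i j, 0 ≤ s i j) (hε : 0 ≤ ε)
    (h : ∀ j, (a j = b j ∧ t (a j) j ≤ s (a j) j) ∨ t (a j) j ≤ ε * s (b j) j) :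
    mkspan a t ≤ (1 + ε * m) * mkspan b s := by
  have hjob : ∀ i j, (if a j = i then t i j else 0) ≤
      (if b j = i then s i j else 0) + ε * s (b j) j := by
    intro i j
    have hextra : 0 ≤ ε * s (b j) j := mul_nonneg hε (hs _ _)
    rcases h j with ⟨hab, hle⟩ | hle
    · split_ifs with hai hbi hbi
      · subst hai; linarith
      · exact absurd (hab ▸ hai) hbi
      · linarith [hs i j]
      · linarith
    · split_ifs with hai hbi
      · subst hai; linarith [hs (a j) j]
      · subst hai; linarith
      · linarith [hs i j]
      · linarith
  refine mkspan_le fun i => ?_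
  calc load a t i ≤ load b s i + ε * ∑ j, s (b j) j := by
        rw [load, load, mul_sum, ← sum_add_distrib]
        exact sum_le_sum fun j _ => hjob i j
    _ ≤ mkspan b s + ε * (m * mkspan b s) := by
        gcongr
        exacts [load_le_mkspan b s i, sum_le_mul_mkspan b s]
    _ = (1 + ε * m) * mkspan b s := by ring

end Makespan

theorem sq_div_sq_le_div {x y : ℝ} (hx : 0 ≤ x) (h : x ≤ y) : x ^ 2 / y ^ 2 ≤ x / y := by
  rw [← div_pow]
  exact pow_le_of_le_one (div_nonneg hx (hx.trans h)) (div_le_one_of_le₀ h (hx.trans h))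
    two_ne_zero

theorem le_inv_mul_of_weighted_min {ι : Type*} {w t : ι → ℝ} {q : ℝ} {k : ι} (hq : 0 < q)
    (hw : ∀ i, w i ∈ Set.Icc q 1) (ht : ∀ i, 0 ≤ t i) (hk : ∀ i, w k * t k ≤ w i * t i) (i : ι) :
    t k ≤ q⁻¹ * t i := by
  rw [le_inv_mul_iff₀ hq]
  calc q * t k ≤ w k * t k := mul_le_mul_of_nonneg_right (hw k).1 (ht k)
    _ ≤ w i * t i := hk i
    _ ≤ t i := mul_le_of_le_one_left (ht i) (hw i).2

section Algorithm

variable {m n : ℕ} {γ η : ℝ} {t that tbar w : Fin m → Fin n → ℝ} {abar a : Fin n → Fin m}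

theorem weight_mem_Icc (hγ : 0 < γ) (hγm : γ ≤ m)
    (hw_greedy : ∀ j : Fin n, tbar (abar j) j < that (abar j) j →
      ∃ l : Fin m, (∀ i, that l j ≤ that i j) ∧ w l j = γ / m ∧ ∀ i, i ≠ l → w i j = 1)
    (hw_non : ∀ j : Fin n, ¬ tbar (abar j) j < that (abar j) j →
      w (abar j) j = γ ^ 2 / m ^ 2 ∧ ∀ i, i ≠ abar j → w i j = 1) (i : Fin m) (j : Fin n) :
    w i j ∈ Set.Icc (γ ^ 2 / m ^ 2) 1 := by
  have hm : (0 : ℝ) < m := hγ.trans_le hγm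
  have hγm1 : γ / m ≤ 1 := (div_le_one hm).2 hγm
  have hq : γ ^ 2 / m ^ 2 ≤ γ / m := sq_div_sq_le_div hγ.le hγm
  have hone : (1 : ℝ) ∈ Set.Icc (γ ^ 2 / m ^ 2) 1 := ⟨hq.trans hγm1, le_rfl⟩
  by_cases hg : tbar (abar j) j < that (abar j) j
  · obtain ⟨l, -, hwl, hwo⟩ := hw_greedy j hg
    by_cases hi : i = l
    · rw [hi, hwl]; exact ⟨hq, hγm1⟩
    · exact hwo i hi ▸ hone
  · obtain ⟨hwk, hwo⟩ := hw_non j hg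
    by_cases hi : i = abar j
    · rw [hi, hwk]; exact ⟨le_rfl, hq.trans hγm1⟩
    · exact hwo i hi ▸ hone

/-- A greedy job costs at most `η` times the fastest predicted time, which is `(γ/m) t̄(ā(j), j)`;
a non-greedy job moved off `ā(j)` pays weight `γ²/m² ≤ γ/m` on `ā(j)`. -/
theorem job_time_le [NeZero m] (hγ : 0 < γ) (hγm : γ ≤ m) (hη : 0 ≤ η)
    (ht : ∀ i j, 0 ≤ t i j) (herr1 : ∀ i j, t i j ≤ η * that i j)
    (htbar : ∀ i j, tbar i j = min (that i j) ((m / γ) * ⨅ i' : Fin m, that i' j))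
    (hw_greedy : ∀ j : Fin n, tbar (abar j) j < that (abar j) j →
      ∃ l : Fin m, (∀ i, that l j ≤ that i j) ∧ w l j = γ / m ∧ ∀ i, i ≠ l → w i j = 1)
    (hw_non : ∀ j : Fin n, ¬ tbar (abar j) j < that (abar j) j →
      w (abar j) j = γ ^ 2 / m ^ 2 ∧ ∀ i, i ≠ abar j → w i j = 1)
    (ha_min : ∀ (j : Fin n) (i : Fin m), w (a j) j * t (a j) j ≤ w i j * t i j) (j : Fin n) :
    (a j = abar j ∧ t (a j) j ≤ η * tbar (a j) j) ∨
      t (a j) j ≤ γ / m * (η * tbar (abar j) j) := by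
  have hm : (0 : ℝ) < m := hγ.trans_le hγm
  have hγm1 : γ / m ≤ 1 := (div_le_one hm).2 hγm
  by_cases hg : tbar (abar j) j < that (abar j) j
  · obtain ⟨l, hl, hwl, hwo⟩ := hw_greedy j hg
    have hmin : γ / m * tbar (abar j) j = ⨅ i', that i' j := by
      rw [htbar] at hg ⊢
      rw [min_eq_right (min_lt_iff.1 hg |>.resolve_left (lt_irrefl _)).le]
      field_simp
    have htl : t l j ≤ η * (γ / m * tbar (abar j) j) :=
      (herr1 l j).trans (mul_le_mul_of_nonneg_left (hmin ▸ le_ciInf hl) hη)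
    right
    rw [mul_left_comm]
    by_cases hal : a j = l
    · exact hal ▸ htl
    · have := ha_min j l
      rw [hwo _ hal, one_mul, hwl] at this
      exact this.trans ((mul_le_of_le_one_left (ht l j) hγm1).trans htl)
  · obtain ⟨hwk, hwo⟩ := hw_non j hg
    have heq : tbar (abar j) j = that (abar j) j :=
      le_antisymm ((htbar _ _).trans_le (min_le_left _ _)) (not_lt.1 hg)
    by_cases hal : a j = abar j
    · exact Or.inl ⟨hal, hal ▸ heq ▸ herr1 _ _⟩
    · right
      have := ha_min j (abar j)
      rw [hwo _ hal, one_mul, hwk] at this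
      calc t (a j) j ≤ γ ^ 2 / m ^ 2 * t (abar j) j := this
        _ ≤ γ / m * t (abar j) j :=
            mul_le_mul_of_nonneg_right (sq_div_sq_le_div hγ.le hγm) (ht _ _)
        _ ≤ γ / m * (η * tbar (abar j) j) := by
            rw [heq]; exact mul_le_mul_of_nonneg_left (herr1 _ _) (by positivity)

end Algorithm

theorem scheduling_approximation_general
    (m n : ℕ) (hm : 0 < m) (γ η : ℝ) (hγ1 : 1 ≤ γ) (hγm : γ ≤ m) (hη : 1 ≤ η)
    (t that : Fin m → Fin n → ℝ) (hthat : ∀ i j, 0 < that i j)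
    -- prediction-error bounds
    (herr1 : ∀ i j, t i j ≤ η * that i j) (herr2 : ∀ i j, that i j ≤ η * t i j)
    -- the rounded predicted matrix t̄
    (tbar : Fin m → Fin n → ℝ)
    (htbar : ∀ i j, tbar i j = min (that i j) ((m / γ) * ⨅ i' : Fin m, that i' j))
    -- ā is an optimal allocation for t̄
    (abar : Fin n → Fin m)
    (habar : ∀ a' : Fin n → Fin m, mkspan abar tbar ≤ mkspan a' tbar)
    -- the weight matrix of Algorithm 3
    (w : Fin m → Fin n → ℝ)
    -- greedy jobs: a machine l attaining the minimum predicted time gets weight γ/m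
    (hw_greedy : ∀ j : Fin n, tbar (abar j) j < that (abar j) j →
      ∃ l : Fin m, (∀ i, that l j ≤ that i j) ∧ w l j = γ / m ∧
        ∀ i, i ≠ l → w i j = 1)
    -- non-greedy jobs: machine ā(j) gets weight γ²/m²
    (hw_non : ∀ j : Fin n, ¬ tbar (abar j) j < that (abar j) j →
      w (abar j) j = γ ^ 2 / m ^ 2 ∧ ∀ i, i ≠ abar j → w i j = 1)
    -- under truthful bidding, each job goes to a machine minimizing the
    -- weighted processing time ...
    (a : Fin n → Fin m)
    (ha_min : ∀ (j : Fin n) (i : Fin m), w (a j) j * t (a j) j ≤ w i j * t i j) :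
    mkspan a t ≤ min ((1 + 2 * γ) * η ^ 2) (m ^ 3 / γ ^ 2) * optMS t := by
  have : NeZero m := ⟨hm.ne'⟩
  have hγ : 0 < γ := by linarith
  have hη0 : 0 ≤ η := by linarith
  have ht : ∀ i j, 0 ≤ t i j := fun i j =>
    (pos_of_mul_pos_right ((hthat i j).trans_le (herr2 i j)) hη0).le
  have hopt := optMS_nonneg ht
  rw [min_mul_of_nonneg _ _ hopt]
  refine le_min ?_ ?_
  · have htbar_le : ∀ i j, tbar i j ≤ η * t i j := fun i j =>
      ((htbar i j).trans_le (min_le_left _ _)).trans (herr2 i j)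
    have htbar_nonneg : ∀ i j, 0 ≤ η * tbar i j := fun i j => mul_nonneg hη0 <| by
      rw [htbar]
      exact le_min (hthat i j).le
        (mul_nonneg (by positivity) (Real.iInf_nonneg fun i => (hthat i j).le))
    calc mkspan a t ≤ (1 + γ / m * m) * mkspan abar (fun i j => η * tbar i j) :=
          mkspan_le_of_agree_or_le_mul htbar_nonneg (by positivity)
            (job_time_le hγ hγm hη0 ht herr1 htbar hw_greedy hw_non ha_min)
      _ = (1 + γ) * (η * mkspan abar tbar) := by
          rw [mkspan_const_mul hη0, div_mul_cancel₀ _ (by positivity)]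
      _ ≤ (1 + γ) * (η * (η * optMS t)) := by
          gcongr; exact mkspan_le_mul_optMS_of_isMin habar htbar_le hη0
      _ ≤ (1 + 2 * γ) * η ^ 2 * optMS t := by
          nlinarith [mul_nonneg hγ.le (mul_nonneg hopt (sq_nonneg η))]
  · calc mkspan a t ≤ (γ ^ 2 / m ^ 2)⁻¹ * m * optMS t :=
          mkspan_le_mul_optMS_of_le_mul ht (by positivity) fun j =>
            le_inv_mul_of_weighted_min (by positivity)
              (weight_mem_Icc hγ hγm hw_greedy hw_non · j) (ht · j) (ha_min j)
      _ = m ^ 3 / γ ^ 2 * optMS t := by field_simp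

/-- Approximation guarantee of Theorem 5.1: under the setup of Algorithm 3
with prediction error `η`, the allocation produced under truthful bidding
has makespan at most `min((1 + 2γ)η², m³/γ²)·MS(t)`. -/
theorem scheduling_approximation
    (m n : ℕ) (hm : 0 < m) (γ η : ℝ) (hγ1 : 1 ≤ γ) (hγm : γ ≤ m) (hη : 1 ≤ η)
    (t that : Fin m → Fin n → ℝ) (hthat : ∀ i j, 0 < that i j)
    -- prediction-error bounds
    (herr1 : ∀ i j, t i j ≤ η * that i j) (herr2 : ∀ i j, that i j ≤ η * t i j)
    -- the rounded predicted matrix t̄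
    (tbar : Fin m → Fin n → ℝ)
    (htbar : ∀ i j, tbar i j = min (that i j) ((m / γ) * ⨅ i' : Fin m, that i' j))
    -- ā is an optimal allocation for t̄
    (abar : Fin n → Fin m)
    (habar : ∀ a' : Fin n → Fin m, mkspan abar tbar ≤ mkspan a' tbar)
    -- the weight matrix of Algorithm 3
    (w : Fin m → Fin n → ℝ)
    -- greedy jobs: a machine l attaining the minimum predicted time gets weight γ/m
    (hw_greedy : ∀ j : Fin n, tbar (abar j) j < that (abar j) j →
      ∃ l : Fin m, (∀ i, that l j ≤ that i j) ∧ w l j = γ / m ∧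
        ∀ i, i ≠ l → w i j = 1)
    -- non-greedy jobs: machine ā(j) gets weight γ²/m²
    (hw_non : ∀ j : Fin n, ¬ tbar (abar j) j < that (abar j) j →
      w (abar j) j = γ ^ 2 / m ^ 2 ∧ ∀ i, i ≠ abar j → w i j = 1)
    -- under truthful bidding, each job goes to a machine minimizing the
    -- weighted processing time ...
    (a : Fin n → Fin m)
    (ha_min : ∀ (j : Fin n) (i : Fin m), w (a j) j * t (a j) j ≤ w i j * t i j)
    -- ... with ties broken in favor of the machine whose weight is below 1
    (ha_tie : ∀ (j : Fin n) (i : Fin m), w i j < 1 →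
      w i j * t i j ≤ w (a j) j * t (a j) j → a j = i) :
    mkspan a t ≤ min ((1 + 2 * γ) * η ^ 2) (m ^ 3 / γ ^ 2) * optMS t :=
  scheduling_approximation_general m n hm γ η hγ1 hγm hη t that hthat herr1 herr2 tbar htbar abar
    habar w hw_greedy hw_non a ha_min
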